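/- Let F ⊆ 2^E with |E| = p^t a prime power, suppose a group G of permutations of E acting transitively on E leaves F invariant, and suppose ∅ ∈ F but E ∉ F. Then F is evasive, i.e., its decision-tree complexity equals |E|. -/

import Mathlib

/-!
A decision tree of depth `d < |E|` leaves at least one element unqueried on every root-to-leaf
path, so the inputs reaching a leaf fill a subcube of dimension at least one, on which
`(-1)^|A|` sums to zero. Hence a family decided by such a tree has `∑_{A ∈ F} (-1)^|A| = 0`.

On the other hand, for `0 < k < p^t`, counting pairs `(a, A)` with `a ∈ A` in the `k`-th slice
`F_k` gives `|F_k| k = p^t · #{A ∈ F_k | a ∈ A}`, the count on the right being independent of `a`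
by transitivity. So `p ∣ |F_k|`, and since `F_0 = {∅}` and `F_{p^t} = ∅`, the alternating sum is
`≡ 1 (mod p)`.
-/

/-- A binary decision tree: leaves hold answers, internal nodes query an element
(left subtree = answer NO, right subtree = answer YES). -/
inductive DTree (α : Type*) where
  | leaf : Bool → DTree α
  | node : α → DTree α → DTree α → DTree α

/-- Evaluate a decision tree on an input set (given by its characteristic function). -/
def DTree.eval {α : Type*} : DTree α → (α → Bool) → Bool
  | .leaf b, _ => b
  | .node e t0 t1, A => if A e then t1.eval A else t0.eval A

/-- The depth (worst-case number of queries) of a decision tree. -/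
def DTree.depth {α : Type*} : DTree α → ℕ
  | .leaf _ => 0
  | .node _ t0 t1 => max t0.depth t1.depth + 1

/-- The tree `T` decides membership in the set system `F`. -/
def Decides {α : Type*} [DecidableEq α] (F : Finset (Finset α)) (T : DTree α) : Prop :=
  ∀ A : Finset α, T.eval (fun e => decide (e ∈ A)) = decide (A ∈ F)

/-- The decision-tree (argument) complexity `c(F)` of a set system `F`. -/
noncomputable def dtComplexity (α : Type*) [DecidableEq α] (F : Finset (Finset α)) : ℕ :=
  sInf {d | ∃ T : DTree α, Decides F T ∧ T.depth = d}

open Finset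

namespace DTree

variable {α : Type*} [DecidableEq α]

theorem sum_powerset_neg_one_pow_eval_eq_zero (T : DTree α) {S A₀ : Finset α}
    (hdisj : Disjoint A₀ S) (hT : T.depth < #S) :
    ∑ A ∈ S.powerset, (if T.eval (fun x => decide (x ∈ A₀ ∪ A)) then (-1 : ℤ) ^ #A else 0)
      = 0 := by
  induction T generalizing S A₀ with
  | leaf b =>
    cases b <;> simp [eval, sum_powerset_neg_one_pow_card_of_nonempty (card_pos.mp hT)]
  | node e t₀ t₁ ih₀ ih₁ =>
    simp only [depth] at hT
    by_cases he : e ∈ S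
    · obtain ⟨S', heS', rfl⟩ : ∃ S', e ∉ S' ∧ S = insert e S' :=
        ⟨S.erase e, notMem_erase e S, (insert_erase he).symm⟩
      rw [card_insert_of_notMem heS'] at hT
      have heA₀ : e ∉ A₀ := disjoint_right.mp hdisj he
      have hdisj' : Disjoint A₀ S' := hdisj.mono_right (subset_insert e S')
      have h₀ : ∀ A ∈ S'.powerset, (if (node e t₀ t₁).eval (fun x => decide (x ∈ A₀ ∪ A))
          then (-1 : ℤ) ^ #A else 0) =
          if t₀.eval (fun x => decide (x ∈ A₀ ∪ A)) then (-1 : ℤ) ^ #A else 0 := by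
        intro A hA
        have : e ∉ A := fun h => heS' (mem_powerset.mp hA h)
        simp [eval, heA₀, this]
      have h₁ : ∀ A ∈ S'.powerset, (if (node e t₀ t₁).eval (fun x => decide (x ∈ A₀ ∪ insert e A))
          then (-1 : ℤ) ^ #(insert e A) else 0) =
          -if t₁.eval (fun x => decide (x ∈ insert e A₀ ∪ A)) then (-1 : ℤ) ^ #A else 0 := by
        intro A hA
        have : e ∉ A := fun h => heS' (mem_powerset.mp hA h)
        rw [card_insert_of_notMem this, union_insert, ← insert_union]
        simp [eval, pow_succ, apply_ite]
      rw [sum_powerset_insert heS', sum_congr rfl h₀, sum_congr rfl h₁, sum_neg_distrib,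
        ih₀ hdisj' (by omega), ih₁ (disjoint_insert_left.mpr ⟨heS', hdisj'⟩) (by omega),
        neg_zero, add_zero]
    · have hbranch : ∀ A ∈ S.powerset, (node e t₀ t₁).eval (fun x => decide (x ∈ A₀ ∪ A)) =
          (if e ∈ A₀ then t₁ else t₀).eval (fun x => decide (x ∈ A₀ ∪ A)) := by
        intro A hA
        have : e ∉ A := fun h => he (mem_powerset.mp hA h)
        by_cases he₀ : e ∈ A₀ <;> simp [eval, he₀, this]
      rw [sum_congr rfl fun A hA => by rw [hbranch A hA]]
      split
      · exact ih₁ hdisj (by omega)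
      · exact ih₀ hdisj (by omega)

end DTree

namespace DTree

variable {α : Type*} [DecidableEq α]

def queryAll (F : Finset (Finset α)) : List α → Finset α → DTree α
  | [], acc => leaf (decide (acc ∈ F))
  | e :: l, acc => node e (queryAll F l acc) (queryAll F l (insert e acc))

theorem depth_queryAll (F : Finset (Finset α)) (l : List α) (acc : Finset α) :
    (queryAll F l acc).depth = l.length := by
  induction l generalizing acc with
  | nil => rfl
  | cons e l ih => simp [queryAll, depth, ih]

theorem eval_queryAll (F : Finset (Finset α)) (l : List α) (acc A : Finset α) :
    (queryAll F l acc).eval (fun x => decide (x ∈ A)) =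
      decide (acc ∪ {x ∈ A | x ∈ l} ∈ F) := by
  induction l generalizing acc with
  | nil => simp [queryAll, eval]
  | cons e l ih =>
    by_cases he : e ∈ A
    · have : insert e acc ∪ {x ∈ A | x ∈ l} = acc ∪ {x ∈ A | x ∈ e :: l} := by
        ext x; simp only [mem_union, mem_insert, mem_filter, List.mem_cons]; grind
      simp [queryAll, eval, he, ih, this]
    · have : acc ∪ {x ∈ A | x ∈ l} = acc ∪ {x ∈ A | x ∈ e :: l} := by
        ext x; simp only [mem_union, mem_filter, List.mem_cons]; grind
      simp [queryAll, eval, he, ih, this]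

theorem decides_queryAll [Fintype α] (F : Finset (Finset α)) :
    Decides F (queryAll F univ.toList ∅) := by
  intro A
  simp [eval_queryAll]

end DTree

section Evasive

variable {α : Type*} [Fintype α] [DecidableEq α] {F : Finset (Finset α)}

theorem dtComplexity_le_card (F : Finset (Finset α)) : dtComplexity α F ≤ Fintype.card α :=
  Nat.sInf_le ⟨_, DTree.decides_queryAll F, by simp [DTree.depth_queryAll]⟩

theorem card_le_depth_of_decides (hF : ∑ A ∈ F, (-1 : ℤ) ^ #A ≠ 0) {T : DTree α}
    (hT : Decides F T) : Fintype.card α ≤ T.depth := by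
  by_contra! hdepth
  refine hF ?_
  have := T.sum_powerset_neg_one_pow_eval_eq_zero (disjoint_empty_left univ) hdepth
  unfold Decides at hT
  simpa [hT, ← sum_filter] using this

theorem dtComplexity_eq_card_of_sum_ne_zero (hF : ∑ A ∈ F, (-1 : ℤ) ^ #A ≠ 0) :
    dtComplexity α F = Fintype.card α := by
  refine (dtComplexity_le_card F).antisymm (le_csInf ?_ ?_)
  · exact ⟨_, _, DTree.decides_queryAll F, rfl⟩
  · rintro _ ⟨T, hT, rfl⟩
    exact card_le_depth_of_decides hF hT

end Evasive

theorem Nat.Prime.dvd_of_pow_dvd_mul_of_lt {p t m k : ℕ} (hp : p.Prime) (h : p ^ t ∣ m * k)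
    (hk₀ : 0 < k) (hk : k < p ^ t) : p ∣ m := by
  by_contra hpm
  have hcop : Nat.Coprime (p ^ t) m := ((hp.coprime_iff_not_dvd).mpr hpm).pow_left t
  exact (Nat.le_of_dvd hk₀ (hcop.dvd_of_dvd_mul_left h)).not_gt hk

section Transitive

variable {α : Type*} [DecidableEq α] {G : Subgroup (Equiv.Perm α)} {H : Finset (Finset α)}

theorem card_filter_apply_mem_eq (hH : ∀ g ∈ G, ∀ A ∈ H, A.image g ∈ H) {g : Equiv.Perm α}
    (hg : g ∈ G) (a : α) : #{A ∈ H | g a ∈ A} = #{A ∈ H | a ∈ A} := by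
  refine card_nbij' (image ⇑g⁻¹) (image g) ?_ ?_ ?_ ?_
  · intro A hA
    simp only [coe_filter, Set.mem_ofPred_eq] at hA ⊢
    exact ⟨hH _ (G.inv_mem hg) A hA.1, by simpa using mem_image_of_mem (⇑g⁻¹) hA.2⟩
  · intro A hA
    simp only [coe_filter, Set.mem_ofPred_eq] at hA ⊢
    exact ⟨hH g hg A hA.1, mem_image_of_mem g hA.2⟩
  · intro A _
    simp [image_image]
  · intro A _
    simp [image_image]

theorem card_mul_eq_card_mul_card_filter_mem [Fintype α]
    (htrans : ∀ a b : α, ∃ g ∈ G, g a = b) (hH : ∀ g ∈ G, ∀ A ∈ H, A.image g ∈ H)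
    {k : ℕ} (hk : ∀ A ∈ H, #A = k) (a : α) :
    #H * k = Fintype.card α * #{A ∈ H | a ∈ A} := by
  rw [← sum_const_nat hk]
  refine sum_card fun b => ?_
  obtain ⟨g, hg, rfl⟩ := htrans a b
  exact card_filter_apply_mem_eq hH hg a

theorem image_mem_slice (hH : ∀ g ∈ G, ∀ A ∈ H, A.image g ∈ H) (k : ℕ) :
    ∀ g ∈ G, ∀ A ∈ H.slice k, A.image g ∈ H.slice k := by
  intro g hg A hA
  rw [mem_slice] at hA ⊢
  exact ⟨hH g hg A hA.1, by rw [card_image_of_injective A g.injective, hA.2]⟩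

end Transitive

section PrimePower

variable {α : Type*} [Fintype α] [DecidableEq α] {G : Subgroup (Equiv.Perm α)}
  {F : Finset (Finset α)} {p t : ℕ}

theorem prime_dvd_card_slice (hp : p.Prime) (hcard : Fintype.card α = p ^ t)
    (htrans : ∀ a b : α, ∃ g ∈ G, g a = b) (hinv : ∀ g ∈ G, ∀ A ∈ F, A.image g ∈ F)
    {k : ℕ} (hk₀ : 0 < k) (hk : k < Fintype.card α) : p ∣ #(F.slice k) := by
  obtain ⟨a⟩ : Nonempty α := Fintype.card_pos_iff.mp (hk₀.trans hk)
  have hcount := card_mul_eq_card_mul_card_filter_mem htrans (image_mem_slice hinv k)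
    (fun A hA => (mem_slice.mp hA).2) a
  rw [hcard] at hcount hk
  exact hp.dvd_of_pow_dvd_mul_of_lt ⟨_, hcount⟩ hk₀ hk

theorem cast_card_slice (hp : p.Prime) (hcard : Fintype.card α = p ^ t)
    (htrans : ∀ a b : α, ∃ g ∈ G, g a = b) (hinv : ∀ g ∈ G, ∀ A ∈ F, A.image g ∈ F)
    (h₀ : ∅ ∈ F) (hu : univ ∉ F) {k : ℕ} (hk : k ≤ Fintype.card α) :
    (#(F.slice k) : ZMod p) = if k = 0 then 1 else 0 := by
  rcases Nat.eq_zero_or_pos k with rfl | hk₀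
  · have : F.slice 0 = {∅} := by ext A; simp only [mem_slice, card_eq_zero, mem_singleton]; grind
    simp [this]
  rcases hk.lt_or_eq with hk | rfl
  · rw [if_neg hk₀.ne', ZMod.natCast_eq_zero_iff]
    exact prime_dvd_card_slice hp hcard htrans hinv hk₀ hk
  · have : F.slice (Fintype.card α) = ∅ := by
      ext A; simp only [mem_slice, card_eq_iff_eq_univ, notMem_empty, iff_false]; grind
    simp [this, hk₀.ne']

theorem cast_sum_neg_one_pow_card_eq_one (hp : p.Prime) (hcard : Fintype.card α = p ^ t)
    (htrans : ∀ a b : α, ∃ g ∈ G, g a = b) (hinv : ∀ g ∈ G, ∀ A ∈ F, A.image g ∈ F)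
    (h₀ : ∅ ∈ F) (hu : univ ∉ F) : ((∑ A ∈ F, (-1 : ℤ) ^ #A : ℤ) : ZMod p) = 1 := by
  push_cast
  rw [← sum_fiberwise_of_maps_to (g := card) (t := Iic (Fintype.card α))
    fun A _ => mem_Iic.mpr A.card_le_univ]
  calc ∑ k ∈ Iic (Fintype.card α), ∑ A ∈ F with #A = k, (-1 : ZMod p) ^ #A
      = ∑ k ∈ Iic (Fintype.card α), (#(F.slice k) : ZMod p) * (-1) ^ k := by
        refine sum_congr rfl fun k _ => ?_
        rw [sum_congr rfl fun A hA => by rw [(mem_filter.mp hA).2], sum_const, nsmul_eq_mul]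
        rfl
    _ = 1 := by
        rw [sum_congr rfl fun k hk => by
          rw [cast_card_slice hp hcard htrans hinv h₀ hu (mem_Iic.mp hk)]]
        simp

end PrimePower

/-- **Rivest–Vuillemin.** Let `F ⊆ 2^E` with `|E|` a prime power, invariant under
a group of permutations of `E` acting transitively on `E`, with `∅ ∈ F` and
`E ∉ F`. Then `F` is evasive: its decision-tree complexity equals `|E|`. -/
theorem rivest_vuillemin (α : Type*) [Fintype α] [DecidableEq α]
    (hpp : ∃ p t : ℕ, p.Prime ∧ Fintype.card α = p ^ t)
    (G : Subgroup (Equiv.Perm α))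
    (htrans : ∀ a b : α, ∃ g ∈ G, g a = b)
    (F : Finset (Finset α))
    (hinv : ∀ g ∈ G, ∀ A ∈ F, A.image g ∈ F)
    (h0 : (∅ : Finset α) ∈ F) (hu : Finset.univ ∉ F) :
    dtComplexity α F = Fintype.card α := by
  obtain ⟨p, t, hp, hcard⟩ := hpp
  have : Fact p.Prime := ⟨hp⟩
  refine dtComplexity_eq_card_of_sum_ne_zero fun hsum => ?_
  have hone := cast_sum_neg_one_pow_card_eq_one hp hcard htrans hinv h0 hu
  rw [hsum, Int.cast_zero] at hone
  exact zero_ne_one hone
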